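/- arXiv:1708.01351 — 2 statements merged into one kernel-verified Lean document; each statement's English description precedes it below -/
import Mathlib

section
/- Let q be a positive real number and g ≥ 1. Let f(T) = ∏_{j=1}^{g} (T - √q e^{iθ_j})(T - √q e^{-iθ_j}) be a polynomial with complex roots of absolute value √q paired by conjugation. Then disc(f) = (-1)^g · 2^{2g²} · q^{2g²-g} · (∏_{j=1}^g sin²θ_j) · (∏_{1≤k<t≤g} (cos θ_k - cos θ_t)²)². -/
/-!
Write `x k = √q e^{iθ_k}` and `y k = √q e^{-iθ_k}`, so that `x k * y k = q` and
`x k + y k = 2√q cos θ_k`: `f` is the product of the quadratics `T² - (x k + y k) T + q`.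
The discriminant of such a product is the product of the discriminants
`(x k + y k)² - 4q = -4q sin² θ_k` times the squares of the pairwise resultants
`q (x k + y k - x t - y t)² = 4q² (cos θ_k - cos θ_t)²`.
-/

open Finset

section PairProducts

variable {M : Type*} [CommMonoid M]

theorem Fin.prod_prod_Ioi_append {α : Type*} {m n : ℕ} (F : α → α → M)
    (x : Fin m → α) (y : Fin n → α) :
    ∏ i, ∏ j ∈ Ioi i, F (Fin.append x y i) (Fin.append x y j)
      = (∏ i, ∏ j ∈ Ioi i, F (x i) (x j)) * (∏ i, ∏ j ∈ Ioi i, F (y i) (y j))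
        * ∏ i, ∏ j, F (x i) (y j) := by
  have hxx (i j : Fin m) : castAdd n i < castAdd n j ↔ i < j := Iff.rfl
  have hxy (i : Fin m) (j : Fin n) : castAdd n i < natAdd m j := by
    simp only [Fin.lt_def, val_castAdd, val_natAdd]; omega
  have hyx (i : Fin n) (j : Fin m) : ¬natAdd m i < castAdd n j := by
    simp only [Fin.lt_def, val_castAdd, val_natAdd]; omega
  simp only [← filter_lt_eq_Ioi, prod_filter, Fin.prod_univ_add, Fin.append_left,
    Fin.append_right, hxx, hxy, hyx, natAdd_lt_natAdd_iff, if_true, if_false, prod_const_one,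
    prod_mul_distrib]
  ac_rfl

theorem prod_prod_eq_prod_diag_mul_prod_Ioi {α : Type*} [Fintype α] [LinearOrder α]
    [LocallyFiniteOrderTop α] [LocallyFiniteOrderBot α] (G : α → α → M) :
    ∏ i, ∏ j, G i j = (∏ i, G i i) * ∏ i, ∏ j ∈ Ioi i, G i j * G j i := by
  have hsplit (i : α) : ∏ j, G i j = (∏ j ∈ Iio i, G i j) * (G i i * ∏ j ∈ Ioi i, G i j) := by
    rw [← prod_filter_mul_prod_filter_not univ (· < i)]
    simp only [not_lt, filter_gt_eq_Iio, filter_le_eq_Ici, Ici_eq_cons_Ioi, prod_cons]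
  have hcomm : ∏ i, ∏ j ∈ Iio i, G i j = ∏ j, ∏ i ∈ Ioi j, G i j :=
    prod_comm' fun i j => by simp
  simp only [hsplit, prod_mul_distrib, hcomm]
  ac_rfl

theorem prod_prod_Ioi_eq_prod_filter_lt {α : Type*} [Fintype α] [LinearOrder α]
    [LocallyFiniteOrderTop α] (f : α → α → M) :
    ∏ i, ∏ j ∈ Ioi i, f i j = ∏ p ∈ {p : α × α | p.1 < p.2}, f p.1 p.2 := by
  rw [prod_filter, Fintype.prod_prod_type]
  simp only [← filter_lt_eq_Ioi, prod_filter]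

end PairProducts

theorem Fin.append_cast_two_mul {α : Type*} {g : ℕ} (a b : Fin g → α) (k : Fin (2 * g)) :
    Fin.append a b (Fin.cast (two_mul g) k)
      = if h : (k : ℕ) < g then a ⟨k, h⟩ else b ⟨k - g, by omega⟩ := by
  split_ifs with hk
  · exact Fin.append_left a b ⟨k, hk⟩
  · have hcast : Fin.cast (two_mul g) k = Fin.natAdd g ⟨k - g, by omega⟩ :=
      Fin.ext (Nat.add_sub_of_le (not_lt.mp hk)).symm
    rw [hcast, Fin.append_right]

section RootDiscr

variable {K : Type*} [CommRing K]

def rootDiscr {ι : Type*} [Fintype ι] [LinearOrder ι] [LocallyFiniteOrderTop ι] (r : ι → K) : K :=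
  ∏ i, ∏ j ∈ Ioi i, (r i - r j) ^ 2

theorem rootDiscr_eq_prod_filter_lt {ι : Type*} [Fintype ι] [LinearOrder ι]
    [LocallyFiniteOrderTop ι] (r : ι → K) :
    rootDiscr r = ∏ i, ∏ j ∈ {j | i < j}, (r i - r j) ^ 2 := by
  simp only [rootDiscr, filter_lt_eq_Ioi]

theorem rootDiscr_comp_cast {m n : ℕ} (h : m = n) (r : Fin n → K) :
    rootDiscr (r ∘ Fin.cast h) = rootDiscr r := by
  subst h
  rfl

/-- The left-hand side is the resultant of `T² - (x + y) T + c` and `T² - (z + w) T + c`. -/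
theorem resultant_eq_of_mul_eq {x y z w c : K} (hxy : x * y = c) (hzw : z * w = c) :
    (x - z) * (x - w) * (y - z) * (y - w) = c * (x + y - (z + w)) ^ 2 := by
  subst hxy
  linear_combination (x * y + z * w - (x + y) * (z + w) + x ^ 2 + y ^ 2) * hzw

theorem rootDiscr_append_of_mul_eq {g : ℕ} (x y : Fin g → K) (c : K) (h : ∀ k, x k * y k = c) :
    rootDiscr (Fin.append x y) = (∏ k, ((x k + y k) ^ 2 - 4 * c)) *
      ∏ k, ∏ t ∈ Ioi k, (c * (x k + y k - (x t + y t)) ^ 2) ^ 2 := by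
  have hdiag (k : Fin g) : (x k - y k) ^ 2 = (x k + y k) ^ 2 - 4 * c := by
    linear_combination (-4) * h k
  have hpair (k t : Fin g) : (x k - x t) ^ 2 * (y k - y t) ^ 2 * ((x k - y t) ^ 2 * (x t - y k) ^ 2)
      = (c * (x k + y k - (x t + y t)) ^ 2) ^ 2 := by
    linear_combination ((x k - x t) * (x k - y t) * (y k - x t) * (y k - y t)
      + c * (x k + y k - (x t + y t)) ^ 2) * resultant_eq_of_mul_eq (h k) (h t)
  rw [rootDiscr, Fin.prod_prod_Ioi_append (fun u v => (u - v) ^ 2),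
    prod_prod_eq_prod_diag_mul_prod_Ioi (fun k t => (x k - y t) ^ 2)]
  simp only [hdiag, ← hpair, prod_mul_distrib]
  ring

theorem neg_four_mul_pow_mul_four_mul_sq_pow_choose_two (g : ℕ) (q : K) :
    (-(4 * q)) ^ g * ((4 * q ^ 2) ^ g.choose 2) ^ 2
      = (-1) ^ g * 2 ^ (2 * g ^ 2) * q ^ (2 * g ^ 2 - g) := by
  have hchoose : g.choose 2 * 2 + g = g ^ 2 := by
    rw [Nat.choose_two_right, Nat.div_mul_cancel (Nat.even_mul_pred_self g).two_dvd,
      Nat.mul_sub_one, Nat.sub_add_cancel (Nat.le_mul_self g), sq]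
  have hexp : 2 * g ^ 2 - g = g + 2 * (g.choose 2 * 2) := by omega
  rw [hexp, ← hchoose, show -(4 * q) = -1 * (2 ^ 2 * q) by ring, show (4 : K) = 2 ^ 2 by norm_num]
  -- keeps `ring` from folding `2 ^ 2` back into the numeral `4`
  generalize (2 : K) = t
  generalize (-1 : K) = u
  ring

end RootDiscr

section ConjugateRoots

open Complex

variable (s : ℂ) (φ : ℝ)

theorem mul_exp_mul_mul_exp_neg : s * exp (φ * I) * (s * exp (-φ * I)) = s ^ 2 := by
  rw [mul_mul_mul_comm, ← exp_add, neg_mul, add_neg_cancel, exp_zero, mul_one, sq]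

theorem mul_exp_add_mul_exp_neg : s * exp (φ * I) + s * exp (-φ * I) = 2 * s * Real.cos φ := by
  rw [ofReal_cos, mul_comm 2 s, mul_assoc, two_cos, mul_add]

end ConjugateRoots

/-- discriminant formula for a degree `2g` Weil-type polynomial whose
roots are `√q e^{± i θ_j}`.  The discriminant is the product of `(r_i - r_j)^2`
over pairs `i < j` of roots. -/
theorem stmt0 (g : ℕ) (q : ℝ) (hq : 0 < q) (θ : Fin g → ℝ)
    (r : Fin (2 * g) → ℂ)
    (hr : ∀ k : Fin (2 * g), r k = if h : (k : ℕ) < g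
      then (Real.sqrt q : ℂ) * Complex.exp ((θ ⟨k, h⟩ : ℂ) * Complex.I)
      else (Real.sqrt q : ℂ) *
        Complex.exp (-(θ ⟨(k : ℕ) - g, by have := k.2; omega⟩ : ℂ) * Complex.I)) :
    (∏ i : Fin (2 * g), ∏ j ∈ Finset.univ.filter (fun j => i < j), (r i - r j) ^ 2)
      = (-1) ^ g * 2 ^ (2 * g ^ 2) * (q : ℂ) ^ (2 * g ^ 2 - g) *
        (∏ j : Fin g, (Real.sin (θ j) : ℂ) ^ 2) *
        (∏ p ∈ Finset.univ.filter (fun p : Fin g × Fin g => p.1 < p.2),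
          ((Real.cos (θ p.1) : ℂ) - (Real.cos (θ p.2) : ℂ)) ^ 2) ^ 2 := by
  set s : ℂ := (Real.sqrt q : ℂ)
  have hs : s ^ 2 = q := by rw [← Complex.ofReal_pow, Real.sq_sqrt hq.le]
  set a : Fin g → ℂ := fun k => s * Complex.exp ((θ k : ℂ) * Complex.I)
  set b : Fin g → ℂ := fun k => s * Complex.exp (-(θ k : ℂ) * Complex.I)
  have hab (k : Fin g) : a k * b k = q := (mul_exp_mul_mul_exp_neg s (θ k)).trans hs
  have hsum (k : Fin g) : a k + b k = 2 * s * Real.cos (θ k) := mul_exp_add_mul_exp_neg s (θ k)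
  have hr' : r = Fin.append a b ∘ Fin.cast (two_mul g) :=
    funext fun k => by rw [hr k, Function.comp_apply, Fin.append_cast_two_mul]
  have hdiag (k : Fin g) : (a k + b k) ^ 2 - 4 * q = -(4 * q) * (Real.sin (θ k) : ℂ) ^ 2 := by
    have hpyth : (Real.sin (θ k) : ℂ) ^ 2 + (Real.cos (θ k) : ℂ) ^ 2 = 1 := by
      exact_mod_cast Real.sin_sq_add_cos_sq (θ k)
    rw [hsum]
    linear_combination (4 * (Real.cos (θ k) : ℂ) ^ 2) * hs + (4 * q : ℂ) * hpyth
  have hpair (k t : Fin g) : (q : ℂ) * (a k + b k - (a t + b t)) ^ 2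
      = 4 * q ^ 2 * ((Real.cos (θ k) : ℂ) - Real.cos (θ t)) ^ 2 := by
    rw [hsum, hsum]
    linear_combination (4 * q * ((Real.cos (θ k) : ℂ) - Real.cos (θ t)) ^ 2) * hs
  rw [← rootDiscr_eq_prod_filter_lt, hr', rootDiscr_comp_cast, rootDiscr_append_of_mul_eq a b q hab]
  simp only [hdiag, hpair]
  rw [prod_prod_Ioi_eq_prod_filter_lt]
  simp only [prod_pow, prod_mul_distrib, prod_const, card_univ, Fintype.card_fin,
    Fintype.card_product_filter_lt]
  rw [← neg_four_mul_pow_mul_four_mul_sq_pow_choose_two]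
  ring
end

section
/- Let g be an odd prime and F a finite field with an element m ∈ F^×. Suppose f(T) ∈ F[T] is monic of degree 2g, equal to a product of distinct monic irreducible polynomials all of the same degree d with the same multiplicity e, where all roots pair up so products of pairs equal m, and suppose f has a transitive Galois structure (all irreducible factors have equal degree and multiplicity, and 2g = d·e·r with r the number of factors). Then the possible factorization shapes (d, e, r) are exactly: (1,1,2g), (2,1,g), (g,1,2), (1,g,2), (2g,1,1), (2,g,1), (1,2g,1). -/
/-!
Since `g` is prime, the only triples with `d * e * r = 2 * g` missing from the list are
`(g, 2, 1)` and `(1, 2, g)`, so it suffices to rule out `e = 2`. Then `f = q ^ 2` with `q`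
separable, so every root of `f` has even multiplicity. As Frobenius permutes the roots
cyclically, the indices `c` with `root c = root 0` are exactly the periods of `root`, a subgroup
of `ZMod (2 * g)` whose order is that multiplicity. By Cauchy it contains the unique element of
order two, `g`, so `root (i + g) = root i` and the pairing gives `root i ^ 2 = m` for all `i`.
This leaves at most two distinct roots, while the separable `q` of degree `g ≥ 3` has `g`.
-/

open Function Polynomial

namespace Function

variable {G α : Type*}

def periods [AddGroup G] (u : G → α) : AddSubgroup G where
  carrier := {c | ∀ i, u (i + c) = u i}
  zero_mem' := by simp
  add_mem' {a b} ha hb i := by rw [← add_assoc, hb, ha]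
  neg_mem' {a} ha i := by rw [← ha (i + -a), neg_add_cancel_right]

theorem mem_periods [AddGroup G] {u : G → α} {c : G} :
    c ∈ periods u ↔ ∀ i, u (i + c) = u i :=
  Iff.rfl

theorem apply_add_natCast_eq_iterate [AddMonoidWithOne G] {u : G → α} {φ : α → α}
    (hφ : ∀ i, u (i + 1) = φ (u i)) (i : G) (n : ℕ) : u (i + n) = φ^[n] (u i) := by
  induction n with
  | zero => simp
  | succ n ih => rw [Nat.cast_succ, ← add_assoc, hφ, ih, iterate_succ_apply']

end Function

namespace ZMod

variable {α : Type*}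

theorem eq_zero_or_eq_of_add_self_eq_zero {k : ℕ} [NeZero (2 * k)] {a : ZMod (2 * k)}
    (ha : a + a = 0) : a = 0 ∨ a = k := by
  have hdvd : 2 * k ∣ 2 * a.val := by
    rw [← natCast_eq_zero_iff]
    push_cast
    rw [natCast_zmod_val]
    exact (two_mul a).trans ha
  obtain ⟨j, hj⟩ := Nat.dvd_of_mul_dvd_mul_left two_pos hdvd
  have hj2 : j < 2 := by
    have := a.val_lt
    rw [hj, mul_comm 2] at this
    exact Nat.lt_of_mul_lt_mul_left this
  rw [← natCast_zmod_val a, hj]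
  interval_cases j <;> simp

variable {φ : α → α}

section

variable {N : ℕ} [NeZero N] {u : ZMod N → α}

theorem mem_periods_iff_apply_eq_apply_zero (hφ : ∀ i, u (i + 1) = φ (u i)) {c : ZMod N} :
    c ∈ periods u ↔ u c = u 0 := by
  refine ⟨fun hc => by simpa using mem_periods.1 hc 0, fun hc => mem_periods.2 fun i => ?_⟩
  rw [← natCast_zmod_val i, add_comm, apply_add_natCast_eq_iterate hφ, hc,
    ← apply_add_natCast_eq_iterate hφ, zero_add]

theorem card_periods [DecidableEq α] (hφ : ∀ i, u (i + 1) = φ (u i)) :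
    Nat.card (periods u) = (Finset.univ.val.map u).count (u 0) := by
  rw [Multiset.count_map, ← Finset.filter_val, Finset.card_val, ← Fintype.card_subtype,
    ← Nat.card_eq_fintype_card]
  exact Nat.card_congr <| Equiv.subtypeEquivRight fun c =>
    (mem_periods_iff_apply_eq_apply_zero hφ).trans eq_comm

end

theorem natCast_mem_periods_of_two_dvd_count [DecidableEq α] {g : ℕ} [NeZero (2 * g)]
    {u : ZMod (2 * g) → α} (hφ : ∀ i, u (i + 1) = φ (u i))
    (h : 2 ∣ (Finset.univ.val.map u).count (u 0)) : (g : ZMod (2 * g)) ∈ periods u := by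
  rw [← card_periods hφ] at h
  have := Fact.mk Nat.prime_two
  obtain ⟨x, hx⟩ := exists_prime_addOrderOf_dvd_card' 2 h
  rw [← AddSubgroup.addOrderOf_coe] at hx
  have hx0 : (x : ZMod (2 * g)) ≠ 0 := by
    rintro h0
    rw [h0, addOrderOf_zero] at hx
    omega
  have hxx : (x : ZMod (2 * g)) + x = 0 := by
    simpa only [hx, two_nsmul] using addOrderOf_nsmul_eq_zero (x : ZMod (2 * g))
  exact (eq_zero_or_eq_of_add_self_eq_zero hxx).resolve_left hx0 ▸ x.2

end ZMod

namespace Polynomial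

theorem separable_prod_of_monic_of_irreducible {K : Type*} [Field K] [PerfectField K]
    {S : Finset K[X]} (hmonic : ∀ p ∈ S, p.Monic) (hirr : ∀ p ∈ S, Irreducible p) :
    (∏ p ∈ S, p).Separable := by
  refine separable_prod' (fun p hp p' hp' hne => ?_) fun p hp =>
    PerfectField.separable_of_irreducible (hirr p hp)
  refine (hirr p hp).coprime_iff_not_dvd.2 fun hdvd => hne ?_
  exact eq_of_monic_of_associated (hmonic p hp) (hmonic p' hp')
    ((hirr p hp).associated_of_dvd (hirr p' hp') hdvd)

theorem not_separable_of_sq_eq_prod_X_sub_C {E : Type*} [Field E] {g : ℕ} [NeZero (2 * g)]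
    (hg : 2 < g) {u : ZMod (2 * g) → E} {φ : E → E} (hφ : ∀ i, u (i + 1) = φ (u i)) {c : E}
    (hpair : ∀ i, u i * u (i + g) = c) {q : E[X]} (hq : q ^ 2 = ∏ i, (X - C (u i))) :
    ¬ q.Separable := by
  classical
  intro hsep
  have hroots : Finset.univ.val.map u = 2 • q.roots := by
    rw [← roots_pow, hq, ← roots_multiset_prod_X_sub_C (Finset.univ.val.map u), Multiset.map_map]
    rfl
  have hperiod := ZMod.natCast_mem_periods_of_two_dvd_count hφ
    (by rw [hroots, Multiset.count_nsmul]; exact dvd_mul_right _ _)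
  have hle : q.roots ≤ nthRoots 2 c := by
    refine (Multiset.le_iff_subset (nodup_roots hsep)).2 fun x hx => ?_
    obtain ⟨i, -, rfl⟩ := Multiset.mem_map.1 (hroots ▸ Multiset.mem_nsmul.2 ⟨two_ne_zero, hx⟩)
    rw [mem_nthRoots two_pos, sq, ← hpair i, mem_periods.1 hperiod i]
  have hcard := congrArg Multiset.card hroots
  rw [Multiset.card_map, Finset.card_val, Finset.card_univ, ZMod.card,
    Multiset.card_nsmul] at hcard
  have := (Multiset.card_le_card hle).trans (card_nthRoots 2 c)
  omega

end Polynomial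

theorem Nat.eq_of_mul_mul_eq_two {x y z : ℕ} (h : x * y * z = 2) :
    (x = 2 ∧ y = 1 ∧ z = 1) ∨ (x = 1 ∧ y = 2 ∧ z = 1) ∨ (x = 1 ∧ y = 1 ∧ z = 2) := by
  have hx := (Nat.dvd_prime Nat.prime_two).1 (h ▸ (dvd_mul_right x y).mul_right z)
  have hy := (Nat.dvd_prime Nat.prime_two).1 (h ▸ (dvd_mul_left y x).mul_right z)
  obtain rfl | rfl := hx <;> obtain rfl | rfl := hy <;> omega

theorem mem_shapes_of_mul_mul_eq_two_mul_prime {g d e r : ℕ} (hg : g.Prime)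
    (h : d * e * r = 2 * g) (he : e ≠ 2) :
    (d, e, r) ∈ ({(1, 1, 2 * g), (2, 1, g), (g, 1, 2), (1, g, 2), (2 * g, 1, 1),
      (2, g, 1), (1, 2 * g, 1)} : Set (ℕ × ℕ × ℕ)) := by
  have cancel {x y z : ℕ} (hxyz : g * (x * y * z) = g * 2) :=
    Nat.eq_of_mul_mul_eq_two (Nat.eq_of_mul_eq_mul_left hg.pos hxyz)
  simp only [Set.mem_insert_iff, Set.mem_singleton_iff, Prod.mk.injEq]
  rcases hg.dvd_mul.1 (Dvd.intro_left 2 h.symm) with hde | ⟨r, rfl⟩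
  · rcases hg.dvd_mul.1 hde with ⟨d, rfl⟩ | ⟨e, rfl⟩
    · rcases cancel (x := d) (y := e) (z := r) (by linarith) with
        ⟨rfl, rfl, rfl⟩ | ⟨rfl, rfl, rfl⟩ | ⟨rfl, rfl, rfl⟩ <;> omega
    · rcases cancel (x := d) (y := e) (z := r) (by linarith) with
        ⟨rfl, rfl, rfl⟩ | ⟨rfl, rfl, rfl⟩ | ⟨rfl, rfl, rfl⟩ <;> omega
  · rcases cancel (x := d) (y := e) (z := r) (by linarith) with
      ⟨rfl, rfl, rfl⟩ | ⟨rfl, rfl, rfl⟩ | ⟨rfl, rfl, rfl⟩ <;> omega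

theorem stmt16_general (g : ℕ) (hg : g.Prime) (hgodd : Odd g) [NeZero (2 * g)]
    {F : Type*} [Field F] [Fintype F] (m : F)
    (f : Polynomial F)
    (d e r : ℕ) (S : Finset (Polynomial F))
    (hS : ∀ p ∈ S, p.Monic ∧ Irreducible p ∧ p.natDegree = d)
    (hfac : f = ∏ p ∈ S, p ^ e)
    (hder : d * e * r = 2 * g)
    (E : Type*) [Field E] [Algebra F E]
    (root : ZMod (2 * g) → E) (φ : E →+* E)
    (hsplit : f.map (algebraMap F E)
      = ∏ i : ZMod (2 * g), (Polynomial.X - Polynomial.C (root i)))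
    (hfrob : ∀ i, root (i + 1) = φ (root i))
    (hpair : ∀ i, root i * root (i + (g : ZMod (2 * g))) = algebraMap F E m) :
    (d, e, r) ∈ ({(1, 1, 2 * g), (2, 1, g), (g, 1, 2), (1, g, 2), (2 * g, 1, 1),
      (2, g, 1), (1, 2 * g, 1)} : Set (ℕ × ℕ × ℕ)) := by
  refine mem_shapes_of_mul_mul_eq_two_mul_prime hg hder ?_
  rintro rfl
  have hg2 : 2 < g := by
    have := hg.two_le
    have := Nat.odd_iff.1 hgodd
    omega
  have hsep : (∏ p ∈ S, p).Separable :=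
    separable_prod_of_monic_of_irreducible (fun p hp => (hS p hp).1) fun p hp => (hS p hp).2.1
  refine not_separable_of_sq_eq_prod_X_sub_C hg2 hfrob hpair ?_ (hsep.map (f := algebraMap F E))
  rw [← Polynomial.map_pow, ← Finset.prod_pow, ← hfac, hsplit]

/-- over a finite field, a monic polynomial `f` of degree `2g`
(`g` an odd prime) which is a product of `r` distinct monic irreducible
polynomials all of degree `d`, each with multiplicity `e`, whose roots carry a
transitive cyclic (Galois/Frobenius) structure and pair up with products equal
to the multiplier `m`, has factorization shape `(d, e, r)` among exactly the
seven listed triples. -/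
theorem stmt16 (g : ℕ) (hg : g.Prime) (hgodd : Odd g) [NeZero (2 * g)]
    {F : Type*} [Field F] [Fintype F] (m : F) (hm : m ≠ 0)
    (f : Polynomial F) (hmonic : f.Monic) (hdeg : f.natDegree = 2 * g)
    (d e r : ℕ) (S : Finset (Polynomial F)) (hr : S.card = r)
    (hS : ∀ p ∈ S, p.Monic ∧ Irreducible p ∧ p.natDegree = d)
    (hfac : f = ∏ p ∈ S, p ^ e)
    (hder : d * e * r = 2 * g)
    (E : Type*) [Field E] [Algebra F E]
    (root : ZMod (2 * g) → E) (φ : E →+* E)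
    (hsplit : f.map (algebraMap F E)
      = ∏ i : ZMod (2 * g), (Polynomial.X - Polynomial.C (root i)))
    (hfrob : ∀ i, root (i + 1) = φ (root i))
    (hpair : ∀ i, root i * root (i + (g : ZMod (2 * g))) = algebraMap F E m) :
    (d, e, r) ∈ ({(1, 1, 2 * g), (2, 1, g), (g, 1, 2), (1, g, 2), (2 * g, 1, 1),
      (2, g, 1), (1, 2 * g, 1)} : Set (ℕ × ℕ × ℕ)) :=
  stmt16_general g hg hgodd m f d e r S hS hfac hder E root φ hsplit hfrob hpair
end
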